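/- arXiv:1712.04800 — 2 statements merged into one kernel-verified Lean document; each statement's English description precedes it below -/
import Mathlib

section
/- (Perspectivity criterion for non-coplanar triangles.) Let K be a division ring and let A, B, C, A', B', C' be points of ℙ³(K) such that A, B, C are not collinear, A', B', C' are not collinear, A ≠ A', B ≠ B', C ≠ C', and the six points are not contained in a common plane (their representative vectors span all of K⁴). Then the three lines AA', BB', CC' contain a common point if and only if each of the three pairs of lines (AB, A'B'), (BC, B'C'), (CA, C'A') has nonzero intersection (i.e., each pair of corresponding sides of the two triangles meets). -/
/-- Three points (1-dimensional subspaces) of `ℙ³(K)` are collinear if they are contained in a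
common 2-dimensional subspace of `K⁴`. -/
def Collinear3 {K : Type*} [DivisionRing K] (P Q R : Submodule K (Fin 4 → K)) : Prop :=
  ∃ W : Submodule K (Fin 4 → K), Module.finrank K W = 2 ∧ P ≤ W ∧ Q ≤ W ∧ R ≤ W


open Module Submodule

section Aux
variable {K : Type*} [DivisionRing K]

lemma finrank4 : Module.finrank K (Fin 4 → K) = 4 := Module.finrank_fin_fun K

lemma stepup (S : Submodule K (Fin 4 → K)) (h : Module.finrank K S < 4) :
    ∃ T : Submodule K (Fin 4 → K), S ≤ T ∧ Module.finrank K T = Module.finrank K S + 1 := by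
  obtain ⟨m, hm⟩ := S.exists_of_finrank_lt (by rw [finrank4]; exact h)
  have hm0 : m ≠ 0 := fun h0 => hm 1 one_ne_zero (by simp [h0])
  have hspan : Module.finrank K (K ∙ m) = 1 := finrank_span_singleton hm0
  have hinf : S ⊓ (K ∙ m) = ⊥ := by
    rw [eq_bot_iff]
    rintro x ⟨hxS, hxm⟩
    obtain ⟨r, rfl⟩ := Submodule.mem_span_singleton.1 hxm
    rcases eq_or_ne r 0 with rfl | hr
    · simp
    · exact absurd hxS (hm r hr)
  have hsum := Submodule.finrank_sup_add_finrank_inf_eq S (K ∙ m)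
  rw [hinf, hspan, finrank_bot] at hsum
  exact ⟨S ⊔ K ∙ m, le_sup_left, by omega⟩

lemma ext2 (S : Submodule K (Fin 4 → K)) (h : Module.finrank K S ≤ 2) :
    ∃ W : Submodule K (Fin 4 → K), Module.finrank K W = 2 ∧ S ≤ W := by
  rcases eq_or_lt_of_le h with he | hl
  · exact ⟨S, he, le_rfl⟩
  · obtain ⟨T, hST, hT⟩ := stepup S (by omega)
    rcases eq_or_lt_of_le (show Module.finrank K T ≤ 2 by omega) with he | hl'
    · exact ⟨T, he, hST⟩
    · obtain ⟨U, hTU, hU⟩ := stepup T (by omega)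
      exact ⟨U, by omega, hST.trans hTU⟩

lemma sup_points {P Q : Submodule K (Fin 4 → K)} (hP : Module.finrank K P = 1)
    (hQ : Module.finrank K Q = 1) (h : P ≠ Q) : Module.finrank K (P ⊔ Q : Submodule K (Fin 4 → K)) = 2 := by
  have hsum := Submodule.finrank_sup_add_finrank_inf_eq P Q
  have hinf : Module.finrank K (P ⊓ Q : Submodule K (Fin 4 → K)) = 0 := by
    by_contra h0
    have h1 : Module.finrank K P ≤ Module.finrank K (P ⊓ Q : Submodule K (Fin 4 → K)) := by omega
    have hPe : P ⊓ Q = P := Submodule.eq_of_le_of_finrank_le inf_le_left h1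
    have hQe : P ⊓ Q = Q := Submodule.eq_of_le_of_finrank_le inf_le_right (by omega)
    exact h (hPe ▸ hQe)
  omega

lemma finrank_pos_of_ne_bot {S : Submodule K (Fin 4 → K)} (h : S ≠ ⊥) :
    1 ≤ Module.finrank K S := by
  by_contra h0
  exact h (Submodule.finrank_eq_zero.1 (by omega))

/-- forward-direction workhorse -/
lemma meet_aux (X Y X' Y' P : Submodule K (Fin 4 → K))
    (hX : Module.finrank K X = 1) (hY : Module.finrank K Y = 1)
    (hX' : Module.finrank K X' = 1) (hY' : Module.finrank K Y' = 1)
    (hXY : X ≠ Y) (hX'Y' : X' ≠ Y') (hP : Module.finrank K P = 1)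
    (hP1 : P ≤ X ⊔ X') (hP2 : P ≤ Y ⊔ Y') : (X ⊔ Y) ⊓ (X' ⊔ Y') ≠ ⊥ := by
  have h1 : Module.finrank K (X ⊔ X' : Submodule K (Fin 4 → K)) ≤ 2 := by
    have := Submodule.finrank_add_le_finrank_add_finrank X X'; omega
  have h2 : Module.finrank K (Y ⊔ Y' : Submodule K (Fin 4 → K)) ≤ 2 := by
    have := Submodule.finrank_add_le_finrank_add_finrank Y Y'; omega
  have hPi : P ≤ (X ⊔ X') ⊓ (Y ⊔ Y') := le_inf hP1 hP2
  have hPi' : 1 ≤ Module.finrank K ((X ⊔ X') ⊓ (Y ⊔ Y') : Submodule K (Fin 4 → K)) :=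
    hP ▸ Submodule.finrank_mono hPi
  have hsum := Submodule.finrank_sup_add_finrank_inf_eq (X ⊔ X') (Y ⊔ Y')
  have hS : Module.finrank K ((X ⊔ X') ⊔ (Y ⊔ Y') : Submodule K (Fin 4 → K)) ≤ 3 := by omega
  have hle : (X ⊔ Y) ⊔ (X' ⊔ Y') ≤ (X ⊔ X') ⊔ (Y ⊔ Y') := by
    apply sup_le <;> apply sup_le
    · exact le_sup_of_le_left le_sup_left
    · exact le_sup_of_le_right le_sup_left
    · exact le_sup_of_le_left le_sup_right
    · exact le_sup_of_le_right le_sup_right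
  have hS' : Module.finrank K ((X ⊔ Y) ⊔ (X' ⊔ Y') : Submodule K (Fin 4 → K)) ≤ 3 :=
    le_trans (Submodule.finrank_mono hle) hS
  have hsum' := Submodule.finrank_sup_add_finrank_inf_eq (X ⊔ Y) (X' ⊔ Y')
  rw [sup_points hX hY hXY, sup_points hX' hY' hX'Y'] at hsum'
  intro hbot
  rw [hbot, finrank_bot] at hsum'
  omega

/-- reverse-direction: sides meeting give coplanarity of the two connecting lines -/
lemma coplanar_aux (X Y X' Y' : Submodule K (Fin 4 → K))
    (hX : Module.finrank K X = 1) (hY : Module.finrank K Y = 1)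
    (hX' : Module.finrank K X' = 1) (hY' : Module.finrank K Y' = 1)
    (hXY : X ≠ Y) (hX'Y' : X' ≠ Y') (h : (X ⊔ Y) ⊓ (X' ⊔ Y') ≠ ⊥) :
    Module.finrank K ((X ⊔ X') ⊔ (Y ⊔ Y') : Submodule K (Fin 4 → K)) ≤ 3 := by
  have hsum' := Submodule.finrank_sup_add_finrank_inf_eq (X ⊔ Y) (X' ⊔ Y')
  rw [sup_points hX hY hXY, sup_points hX' hY' hX'Y'] at hsum'
  have hpos := finrank_pos_of_ne_bot h
  have hle : (X ⊔ X') ⊔ (Y ⊔ Y') ≤ (X ⊔ Y) ⊔ (X' ⊔ Y') := by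
    apply sup_le <;> apply sup_le
    · exact le_sup_of_le_left le_sup_left
    · exact le_sup_of_le_right le_sup_left
    · exact le_sup_of_le_left le_sup_right
    · exact le_sup_of_le_right le_sup_right
  have := Submodule.finrank_mono hle
  omega

lemma point_ne {P Q R : Submodule K (Fin 4 → K)} (hP : Module.finrank K P = 1)
    (hR : Module.finrank K R = 1) (h : ¬ Collinear3 P Q R) (hPQ : P = Q) : False := by
  apply h
  obtain ⟨W, hW, hle⟩ := ext2 (P ⊔ R) (by
    have := Submodule.finrank_add_le_finrank_add_finrank P R; omega)
  exact ⟨W, hW, (le_sup_left.trans hle), hPQ ▸ (le_sup_left.trans hle), le_sup_right.trans hle⟩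

lemma point_ne' {P Q R : Submodule K (Fin 4 → K)} (hP : Module.finrank K P = 1)
    (hQ : Module.finrank K Q = 1) (h : ¬ Collinear3 P Q R) (hQR : Q = R) : False := by
  apply h
  obtain ⟨W, hW, hle⟩ := ext2 (P ⊔ Q) (by
    have := Submodule.finrank_add_le_finrank_add_finrank P Q; omega)
  exact ⟨W, hW, le_sup_left.trans hle, le_sup_right.trans hle, hQR ▸ (le_sup_right.trans hle)⟩

lemma point_ne'' {P Q R : Submodule K (Fin 4 → K)} (hP : Module.finrank K P = 1)
    (hQ : Module.finrank K Q = 1) (h : ¬ Collinear3 P Q R) (hPR : R = P) : False := by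
  apply h
  obtain ⟨W, hW, hle⟩ := ext2 (P ⊔ Q) (by
    have := Submodule.finrank_add_le_finrank_add_finrank P Q; omega)
  exact ⟨W, hW, le_sup_left.trans hle, le_sup_right.trans hle, hPR ▸ (le_sup_left.trans hle)⟩

end Aux

/-- Perspectivity criterion for non-coplanar triangles in `ℙ³(K)`: two triangles not contained
in a common plane are point-perspective if and only if each pair of corresponding sides
meets. -/
theorem perspective_iff_sides_meet {K : Type*} [DivisionRing K]
    (A B C A' B' C' : Submodule K (Fin 4 → K))
    (hA : Module.finrank K A = 1) (hB : Module.finrank K B = 1)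
    (hC : Module.finrank K C = 1) (hA' : Module.finrank K A' = 1)
    (hB' : Module.finrank K B' = 1) (hC' : Module.finrank K C' = 1)
    (hABC : ¬ Collinear3 A B C) (hA'B'C' : ¬ Collinear3 A' B' C')
    (hAA' : A ≠ A') (hBB' : B ≠ B') (hCC' : C ≠ C')
    (hspan : A ⊔ B ⊔ C ⊔ A' ⊔ B' ⊔ C' = ⊤) :
    (∃ P : Submodule K (Fin 4 → K), Module.finrank K P = 1 ∧
        P ≤ A ⊔ A' ∧ P ≤ B ⊔ B' ∧ P ≤ C ⊔ C') ↔
      ((A ⊔ B) ⊓ (A' ⊔ B') ≠ ⊥ ∧ (B ⊔ C) ⊓ (B' ⊔ C') ≠ ⊥ ∧ (C ⊔ A) ⊓ (C' ⊔ A') ≠ ⊥) := by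
  have hAB : A ≠ B := fun h => point_ne hA hC hABC h
  have hBC : B ≠ C := fun h => point_ne' hA hB hABC h
  have hCA : C ≠ A := fun h => point_ne'' hA hB hABC h
  have hAB' : A' ≠ B' := fun h => point_ne hA' hC' hA'B'C' h
  have hBC' : B' ≠ C' := fun h => point_ne' hA' hB' hA'B'C' h
  have hCA' : C' ≠ A' := fun h => point_ne'' hA' hB' hA'B'C' h
  constructor
  · rintro ⟨P, hP1, hPA, hPB, hPC⟩
    exact ⟨meet_aux A B A' B' P hA hB hA' hB' hAB hAB' hP1 hPA hPB,
      meet_aux B C B' C' P hB hC hB' hC' hBC hBC' hP1 hPB hPC,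
      meet_aux C A C' A' P hC hA hC' hA' hCA hCA' hP1 hPC hPA⟩
  · rintro ⟨h1, h2, h3⟩
    have hT : Module.finrank K ((A ⊔ A') ⊔ (B ⊔ B') : Submodule K (Fin 4 → K)) ≤ 3 :=
      coplanar_aux A B A' B' hA hB hA' hB' hAB hAB' h1
    have hAC3 : Module.finrank K ((C ⊔ C') ⊔ (A ⊔ A') : Submodule K (Fin 4 → K)) ≤ 3 :=
      coplanar_aux C A C' A' hC hA hC' hA' hCA hCA' h3
    have hBC3 : Module.finrank K ((B ⊔ B') ⊔ (C ⊔ C') : Submodule K (Fin 4 → K)) ≤ 3 :=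
      coplanar_aux B C B' C' hB hC hB' hC' hBC hBC' h2
    have dAA' := sup_points hA hA' hAA'
    have dBB' := sup_points hB hB' hBB'
    have dCC' := sup_points hC hC' hCC'
    -- intersections of the connecting lines are nonzero
    have sAC := Submodule.finrank_sup_add_finrank_inf_eq (C ⊔ C') (A ⊔ A')
    rw [dAA', dCC'] at sAC
    have hACpos : 1 ≤ Module.finrank K ((C ⊔ C') ⊓ (A ⊔ A') : Submodule K (Fin 4 → K)) := by omega
    have sBC := Submodule.finrank_sup_add_finrank_inf_eq (B ⊔ B') (C ⊔ C')
    rw [dBB', dCC'] at sBC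
    have hBCpos : 1 ≤ Module.finrank K ((B ⊔ B') ⊓ (C ⊔ C') : Submodule K (Fin 4 → K)) := by omega
    -- T ⊔ CC' = ⊤
    set T : Submodule K (Fin 4 → K) := (A ⊔ A') ⊔ (B ⊔ B') with hTdef
    have hTop : T ⊔ (C ⊔ C') = ⊤ := by
      apply le_antisymm le_top
      rw [← hspan]
      apply sup_le
      apply sup_le
      apply sup_le
      apply sup_le
      apply sup_le
      · exact le_sup_of_le_left (le_sup_of_le_left le_sup_left)
      · exact le_sup_of_le_left (le_sup_of_le_right le_sup_left)
      · exact le_sup_of_le_right le_sup_left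
      · exact le_sup_of_le_left (le_sup_of_le_left le_sup_right)
      · exact le_sup_of_le_left (le_sup_of_le_right le_sup_right)
      · exact le_sup_of_le_right le_sup_right
    have hTopr : Module.finrank K (T ⊔ (C ⊔ C') : Submodule K (Fin 4 → K)) = 4 := by
      rw [hTop, finrank_top, finrank4]
    have sT := Submodule.finrank_sup_add_finrank_inf_eq T (C ⊔ C')
    rw [hTopr, dCC'] at sT
    have hPle1 : Module.finrank K (T ⊓ (C ⊔ C') : Submodule K (Fin 4 → K)) ≤ 1 := by omega
    have hACle : (C ⊔ C') ⊓ (A ⊔ A') ≤ T ⊓ (C ⊔ C') :=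
      le_inf (inf_le_right.trans le_sup_left) inf_le_left
    have hBCle : (B ⊔ B') ⊓ (C ⊔ C') ≤ T ⊓ (C ⊔ C') :=
      le_inf (inf_le_left.trans le_sup_right) inf_le_right
    have hPrank : Module.finrank K (T ⊓ (C ⊔ C') : Submodule K (Fin 4 → K)) = 1 :=
      le_antisymm hPle1 (le_trans hACpos (Submodule.finrank_mono hACle))
    have eqAC : (C ⊔ C') ⊓ (A ⊔ A') = T ⊓ (C ⊔ C') :=
      Submodule.eq_of_le_of_finrank_le hACle (by omega)
    have eqBC : (B ⊔ B') ⊓ (C ⊔ C') = T ⊓ (C ⊔ C') :=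
      Submodule.eq_of_le_of_finrank_le hBCle (by omega)
    refine ⟨T ⊓ (C ⊔ C'), hPrank, ?_, ?_, inf_le_right⟩
    · rw [← eqAC]; exact inf_le_right
    · rw [← eqBC]; exact inf_le_left
end

section
/- (Pappus implies Gallucci.) Let K be a division ring. Suppose the Pappus property holds in ℙ³(K): for every pair of distinct coplanar lines ℓ, ℓ' of ℙ³(K), every three distinct points A, B, C on ℓ and every three distinct points A', B', C' on ℓ', none equal to the intersection point of ℓ and ℓ', the three points AB' ∩ A'B, AC' ∩ A'C, BC' ∩ B'C are collinear. Then the Gallucci property holds in ℙ³(K): for all pairwise skew lines a, b, c and pairwise skew lines e, f, g with each of e, f, g meeting each of a, b, c, every common transversal h of {a,b,c} meets every common transversal d of {e,f,g}. -/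
/-- The Pappus property in `ℙ³(K)`: for every pair of distinct coplanar lines `ℓ, ℓ'`, every
three distinct points `A, B, C` on `ℓ` and `A', B', C'` on `ℓ'` (none equal to the
intersection point of `ℓ` and `ℓ'`), the three points `AB' ∩ A'B`, `AC' ∩ A'C`, `BC' ∩ B'C`
are collinear. -/
def PappusProperty (K : Type*) [DivisionRing K] : Prop :=
  ∀ l l' : Submodule K (Fin 4 → K),
    Module.finrank K l = 2 → Module.finrank K l' = 2 → l ≠ l' →
    (∃ W : Submodule K (Fin 4 → K), Module.finrank K W = 3 ∧ l ≤ W ∧ l' ≤ W) →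
    ∀ A B C A' B' C' X Y Z : Submodule K (Fin 4 → K),
      Module.finrank K A = 1 → Module.finrank K B = 1 → Module.finrank K C = 1 →
      Module.finrank K A' = 1 → Module.finrank K B' = 1 → Module.finrank K C' = 1 →
      Module.finrank K X = 1 → Module.finrank K Y = 1 → Module.finrank K Z = 1 →
      A ≤ l → B ≤ l → C ≤ l → A ≠ B → A ≠ C → B ≠ C →
      A' ≤ l' → B' ≤ l' → C' ≤ l' → A' ≠ B' → A' ≠ C' → B' ≠ C' →
      A ≠ l ⊓ l' → B ≠ l ⊓ l' → C ≠ l ⊓ l' →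
      A' ≠ l ⊓ l' → B' ≠ l ⊓ l' → C' ≠ l ⊓ l' →
      X ≤ A ⊔ B' → X ≤ A' ⊔ B →
      Y ≤ A ⊔ C' → Y ≤ A' ⊔ C →
      Z ≤ B ⊔ C' → Z ≤ B' ⊔ C →
      Collinear3 X Y Z

/-- The Gallucci property in `ℙ³(K)`: for all pairwise skew lines `a, b, c` and pairwise skew
lines `e, f, g` with each of `e, f, g` meeting each of `a, b, c`, every common transversal `h`
of `a, b, c` meets every common transversal `d` of `e, f, g`. -/
def GallucciProperty (K : Type*) [DivisionRing K] : Prop :=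
  ∀ a b c e f g h d : Submodule K (Fin 4 → K),
    Module.finrank K a = 2 → Module.finrank K b = 2 → Module.finrank K c = 2 →
    Module.finrank K e = 2 → Module.finrank K f = 2 → Module.finrank K g = 2 →
    Module.finrank K h = 2 → Module.finrank K d = 2 →
    a ⊓ b = ⊥ → a ⊓ c = ⊥ → b ⊓ c = ⊥ →
    e ⊓ f = ⊥ → e ⊓ g = ⊥ → f ⊓ g = ⊥ →
    e ⊓ a ≠ ⊥ → e ⊓ b ≠ ⊥ → e ⊓ c ≠ ⊥ →
    f ⊓ a ≠ ⊥ → f ⊓ b ≠ ⊥ → f ⊓ c ≠ ⊥ →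
    g ⊓ a ≠ ⊥ → g ⊓ b ≠ ⊥ → g ⊓ c ≠ ⊥ →
    h ⊓ a ≠ ⊥ → h ⊓ b ≠ ⊥ → h ⊓ c ≠ ⊥ →
    d ⊓ e ≠ ⊥ → d ⊓ f ≠ ⊥ → d ⊓ g ≠ ⊥ →
    h ⊓ d ≠ ⊥

/-!
Pappus forces `K` to be commutative: for `b, u ∉ {0, 1}` with `u * b ≠ 1`, take
`A, B, C = (1:1:0), (1:b:0), (1:u⁻¹:0)` and `A', B', C' = (1:0:b), (1:0:1), (1:0:ub)` in the plane
`x₃ = 0`. Then `AB' ∩ A'B` and `AC' ∩ A'C` lie on the line `x₀ = 0`, and `BC' ∩ B'C` lies on it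
exactly when `u * b = b * u`.

Over a field, two skew lines `a, c` split `K⁴ = a ⊕ c`, and the transversals of `a, b, c` are the
lines `⟨w_a, w_c⟩` spanned by the components of the points `w` of `b`. A line `d` meeting three
pairwise skew transversals is the image of `b` under `w ↦ α • w_a + β • w_c` for some
`(α, β) ≠ 0`, and this image meets every transversal. Commutativity is what makes that map linear.
-/

open Module Submodule

section LinearAlgebra

variable {K V : Type*} [DivisionRing K] [AddCommGroup V] [Module K V]

theorem finrank_span_pair {u v : V} (h : LinearIndependent K ![u, v]) :
    finrank K (span K {u, v}) = 2 := by
  rw [← Matrix.range_cons_cons_empty u v ![], finrank_span_eq_card h, Fintype.card_fin]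

theorem eq_span_pair_of_finrank_eq_two {W : Submodule K V} (hW : finrank K W = 2) {u v : V}
    (hu : u ∈ W) (hv : v ∈ W) (huv : LinearIndependent K ![u, v]) : W = span K {u, v} := by
  have : Module.Finite K W := Module.finite_of_finrank_eq_succ hW
  refine (eq_of_le_of_finrank_le ?_ ?_).symm
  · exact span_le.mpr (Set.insert_subset hu (Set.singleton_subset_iff.mpr hv))
  · rw [hW, finrank_span_pair huv]

theorem notMem_of_inf_eq_bot {p q : Submodule K V} (hpq : p ⊓ q = ⊥) {v : V} (hv : v ∈ p)
    (hv₀ : v ≠ 0) : v ∉ q :=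
  fun hq => hv₀ (disjoint_def.mp (disjoint_iff.mpr hpq) v hv hq)

theorem linearIndependent_pair_of_inf_eq_bot {p q : Submodule K V} (hpq : p ⊓ q = ⊥) {u v : V}
    (hu : u ∈ p) (hv : v ∈ q) (hu₀ : u ≠ 0) (hv₀ : v ≠ 0) : LinearIndependent K ![u, v] :=
  (LinearIndependent.pair_iff' hu₀).mpr fun s hs =>
    notMem_of_inf_eq_bot (inf_comm p q ▸ hpq) hv hv₀ (hs ▸ p.smul_mem s hu)

theorem span_singleton_le_sup_iff {u v w : V} :
    span K {w} ≤ span K {u} ⊔ span K {v} ↔ ∃ s t : K, s • u + t • v = w := by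
  rw [span_singleton_le_iff_mem, ← span_insert, mem_span_pair]

end LinearAlgebra

section Pappus

variable {K : Type*} [DivisionRing K]

def coordPoint (i : Fin 4) (x : K) : Fin 4 → K := Pi.single 0 1 + Pi.single i x

def coordLine (i : Fin 4) : Submodule K (Fin 4 → K) := span K {Pi.single 0 1, Pi.single i 1}

section

variable {i j : Fin 4} {x y : K}

theorem coordPoint_apply_zero (hi : i ≠ 0) : coordPoint i x 0 = 1 := by
  simp [coordPoint, hi.symm]

theorem coordPoint_apply_self (hi : i ≠ 0) : coordPoint i x i = x := by
  simp [coordPoint, hi]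

theorem coordPoint_ne_zero (hi : i ≠ 0) : coordPoint i x ≠ 0 :=
  fun h => one_ne_zero (α := K) (by simpa [coordPoint_apply_zero hi] using congrFun h 0)

theorem coordPoint_mem_coordLine : coordPoint i x ∈ coordLine i :=
  mem_span_pair.mpr ⟨1, x, by simp [coordPoint, ← Pi.single_smul']⟩

theorem finrank_span_coordPoint (hi : i ≠ 0) : finrank K (span K {coordPoint i x}) = 1 :=
  finrank_span_singleton (coordPoint_ne_zero hi)

theorem span_coordPoint_le_coordLine : span K {coordPoint i x} ≤ coordLine i :=
  (span_singleton_le_iff_mem _ _).mpr coordPoint_mem_coordLine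

theorem coordPoint_notMem_coordLine (hi : i ≠ 0) (hij : i ≠ j) (hx : x ≠ 0) :
    coordPoint i x ∉ coordLine j := by
  intro h
  obtain ⟨s, t, hst⟩ := mem_span_pair.mp h
  exact hx (by simpa [hi, hij, coordPoint_apply_self hi] using (congrFun hst i).symm)

theorem span_coordPoint_inj (hi : i ≠ 0) :
    span K {coordPoint i x} = span K {coordPoint i y} ↔ x = y := by
  refine ⟨fun h => ?_, fun h => h ▸ rfl⟩
  obtain ⟨s, hs⟩ := mem_span_singleton.mp (h ▸ mem_span_singleton_self (coordPoint i x))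
  have h₀ := congrFun hs 0
  have hᵢ := congrFun hs i
  simp only [Pi.smul_apply, coordPoint_apply_zero hi, coordPoint_apply_self hi, smul_eq_mul,
    mul_one] at h₀ hᵢ
  rw [← hᵢ, h₀, one_mul]

theorem span_coordPoint_ne_of_le_coordLine {W : Submodule K (Fin 4 → K)} (hW : W ≤ coordLine j)
    (hi : i ≠ 0) (hij : i ≠ j) (hx : x ≠ 0) : span K {coordPoint i x} ≠ W :=
  fun h => coordPoint_notMem_coordLine hi hij hx (hW (h ▸ mem_span_singleton_self _))

theorem finrank_coordLine (hi : i ≠ 0) :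
    finrank K (coordLine i : Submodule K (Fin 4 → K)) = 2 := by
  refine finrank_span_pair (LinearIndependent.pair_iff.mpr fun (s t : K) hst => ⟨?_, ?_⟩)
  · simpa [hi.symm] using congrFun hst 0
  · simpa [hi] using congrFun hst i

theorem coordLine_le_ker_proj (hj : j ≠ 0) (hij : i ≠ j) :
    coordLine i ≤ LinearMap.ker (LinearMap.proj j : (Fin 4 → K) →ₗ[K] K) := by
  rw [coordLine, span_le, Set.insert_subset_iff, Set.singleton_subset_iff]
  simp [hj.symm, hij.symm]

end

theorem finrank_ker_proj (j : Fin 4) :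
    finrank K (LinearMap.ker (LinearMap.proj j : (Fin 4 → K) →ₗ[K] K)) = 3 := by
  have := LinearMap.finrank_range_add_finrank_ker (LinearMap.proj j : (Fin 4 → K) →ₗ[K] K)
  rw [LinearMap.range_eq_top.mpr (Function.surjective_eval j), finrank_top, finrank_self,
    finrank_fin_fun] at this
  omega

theorem Collinear3.mem_span_pair {x y z : Fin 4 → K} (hxy : LinearIndependent K ![x, y])
    (h : Collinear3 (span K {x}) (span K {y}) (span K {z})) : z ∈ span K {x, y} := by
  obtain ⟨W, hW, hx, hy, hz⟩ := h
  rw [← eq_span_pair_of_finrank_eq_two hW (hx (mem_span_singleton_self x))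
    (hy (mem_span_singleton_self y)) hxy]
  exact hz (mem_span_singleton_self z)

-- The three points are `AB' ∩ A'B`, `AC' ∩ A'C` and `BC' ∩ B'C = B + t • C'` for the
-- configuration described at the top.
theorem PappusProperty.collinear_of_coords (hp : PappusProperty K) {u b t : K} (hb₀ : b ≠ 0)
    (hb₁ : b ≠ 1) (hu₀ : u ≠ 0) (hu₁ : u ≠ 1) (hub : u * b ≠ 1)
    (ht : t * (u * b - 1) = 1 - b * u) :
    Collinear3 (span K {![0, 1, -1, 0]}) (span K {![0, 1, -(u * b), 0]})
      (span K {![1 + t, b, t * (u * b), 0]}) := by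
  have h₁ : (1 : Fin 4) ≠ 0 := by decide
  have h₂ : (2 : Fin 4) ≠ 0 := by decide
  have h₁₂ : (1 : Fin 4) ≠ 2 := by decide
  have hz : t * (u * b) + b * u = 1 + t := by
    rw [mul_sub, mul_one, sub_eq_iff_eq_add] at ht
    rw [ht]
    abel
  refine hp (coordLine 1) (coordLine 2) (finrank_coordLine h₁) (finrank_coordLine h₂)
    (fun h => coordPoint_notMem_coordLine h₁ h₁₂ one_ne_zero (h ▸ coordPoint_mem_coordLine))
    ⟨_, finrank_ker_proj 3, coordLine_le_ker_proj (by decide) (by decide),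
      coordLine_le_ker_proj (by decide) (by decide)⟩
    (span K {coordPoint 1 1}) (span K {coordPoint 1 b}) (span K {coordPoint 1 u⁻¹})
    (span K {coordPoint 2 b}) (span K {coordPoint 2 1}) (span K {coordPoint 2 (u * b)}) _ _ _
    (finrank_span_coordPoint h₁) (finrank_span_coordPoint h₁) (finrank_span_coordPoint h₁)
    (finrank_span_coordPoint h₂) (finrank_span_coordPoint h₂) (finrank_span_coordPoint h₂)
    (finrank_span_singleton fun h => by simpa using congrFun h 1)
    (finrank_span_singleton fun h => by simpa using congrFun h 1)
    (finrank_span_singleton fun h => hb₀ (by simpa using congrFun h 1))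
    span_coordPoint_le_coordLine span_coordPoint_le_coordLine span_coordPoint_le_coordLine
    ((span_coordPoint_inj h₁).not.mpr hb₁.symm)
    ((span_coordPoint_inj h₁).not.mpr fun h => hu₁ (inv_eq_one.mp h.symm))
    ((span_coordPoint_inj h₁).not.mpr fun h => hub (by rw [h, mul_inv_cancel₀ hu₀]))
    span_coordPoint_le_coordLine span_coordPoint_le_coordLine span_coordPoint_le_coordLine
    ((span_coordPoint_inj h₂).not.mpr hb₁)
    ((span_coordPoint_inj h₂).not.mpr fun h => hu₁ (mul_right_cancel₀ hb₀ (by rw [one_mul, ← h])))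
    ((span_coordPoint_inj h₂).not.mpr hub.symm)
    (span_coordPoint_ne_of_le_coordLine inf_le_right h₁ h₁₂ one_ne_zero)
    (span_coordPoint_ne_of_le_coordLine inf_le_right h₁ h₁₂ hb₀)
    (span_coordPoint_ne_of_le_coordLine inf_le_right h₁ h₁₂ (inv_ne_zero hu₀))
    (span_coordPoint_ne_of_le_coordLine inf_le_left h₂ h₁₂.symm hb₀)
    (span_coordPoint_ne_of_le_coordLine inf_le_left h₂ h₁₂.symm one_ne_zero)
    (span_coordPoint_ne_of_le_coordLine inf_le_left h₂ h₁₂.symm (mul_ne_zero hu₀ hb₀))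
    (span_singleton_le_sup_iff.mpr ⟨1, -1, ?_⟩) (span_singleton_le_sup_iff.mpr ⟨-b⁻¹, b⁻¹, ?_⟩)
    (span_singleton_le_sup_iff.mpr ⟨1, -1, ?_⟩) (span_singleton_le_sup_iff.mpr ⟨-u, u, ?_⟩)
    (span_singleton_le_sup_iff.mpr ⟨1, t, ?_⟩)
    (span_singleton_le_sup_iff.mpr ⟨t * (u * b), b * u, ?_⟩)
  all_goals ext k; fin_cases k <;> simp [coordPoint, hb₀, hu₀, hz]

theorem commute_of_pappusProperty (hp : PappusProperty K) {u b : K} (hb₀ : b ≠ 0) (hb₁ : b ≠ 1)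
    (hu₀ : u ≠ 0) (hu₁ : u ≠ 1) (hub : u * b ≠ 1) : u * b = b * u := by
  obtain ⟨t, ht⟩ : ∃ t : K, t * (u * b - 1) = 1 - b * u :=
    ⟨_, inv_mul_cancel_right₀ (sub_ne_zero.mpr hub) _⟩
  have hxy : LinearIndependent K ![![0, 1, -1, 0], ![0, 1, -(u * b), 0]] := by
    refine (LinearIndependent.pair_iff' fun h => by simpa using congrFun h 1).mpr fun s h => hub ?_
    have h₁ := congrFun h 1
    have h₂ := congrFun h 2
    simp only [Pi.smul_apply, Matrix.cons_val_zero, Matrix.cons_val_one, Matrix.cons_val,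
      smul_eq_mul, mul_one, mul_neg, neg_inj] at h₁ h₂
    rw [← h₂, h₁]
  obtain ⟨r, s, h⟩ := mem_span_pair.mp
    ((hp.collinear_of_coords hb₀ hb₁ hu₀ hu₁ hub ht).mem_span_pair hxy)
  have ht₁ : t = -1 := eq_neg_of_add_eq_zero_right (by simpa using (congrFun h 0).symm)
  rw [ht₁] at ht
  simpa using ht

theorem mul_comm_of_pappusProperty (hp : PappusProperty K) (x y : K) : x * y = y * x := by
  rcases eq_or_ne x 0 with rfl | hx₀
  · simp
  rcases eq_or_ne x 1 with rfl | hx₁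
  · simp
  rcases eq_or_ne y 0 with rfl | hy₀
  · simp
  rcases eq_or_ne y 1 with rfl | hy₁
  · simp
  rcases eq_or_ne (x * y) 1 with hxy | hxy
  · rw [hxy, eq_inv_of_mul_eq_one_left hxy, mul_inv_cancel₀ hy₀]
  exact commute_of_pappusProperty hp hy₀ hy₁ hx₀ hx₁ hxy

end Pappus

section Regulus

variable {K V : Type*} [Field K] [AddCommGroup V] [Module K V] {a c : Submodule K V}

noncomputable def scaleComponents (hac : IsCompl a c) (α β : K) : V →ₗ[K] V :=
  α • a.projection c hac + β • c.projection a hac.symm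

noncomputable def transversal (hac : IsCompl a c) (w : V) : Submodule K V :=
  span K {a.projection c hac w, c.projection a hac.symm w}

variable (hac : IsCompl a c)

@[simp]
theorem projection_scaleComponents (α β : K) (v : V) :
    a.projection c hac (scaleComponents hac α β v) = α • a.projection c hac v := by
  simp [scaleComponents, projection_apply_of_mem_left hac (projection_apply_mem hac v),
    projection_apply_of_mem_right hac (projection_apply_mem hac.symm v)]

@[simp]
theorem projection_symm_scaleComponents (α β : K) (v : V) :
    c.projection a hac.symm (scaleComponents hac α β v) = β • c.projection a hac.symm v := by
  simp [scaleComponents, projection_apply_of_mem_left hac.symm (projection_apply_mem hac.symm v),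
    projection_apply_of_mem_right hac.symm (projection_apply_mem hac v)]

theorem scaleComponents_ne_zero {w : V} (hwa : w ∉ a) (hwc : w ∉ c) {α β : K}
    (hαβ : α ≠ 0 ∨ β ≠ 0) : scaleComponents hac α β w ≠ 0 := by
  intro h
  have hα := congrArg (a.projection c hac) h
  have hβ := congrArg (c.projection a hac.symm) h
  rw [projection_scaleComponents, map_zero, smul_eq_zero, projection_apply_eq_zero_iff] at hα
  rw [projection_symm_scaleComponents, map_zero, smul_eq_zero, projection_apply_eq_zero_iff] at hβ
  tauto

theorem mem_transversal_iff {v w : V} :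
    v ∈ transversal hac w ↔ ∃ α β : K, scaleComponents hac α β w = v :=
  mem_span_pair

theorem self_mem_transversal (w : V) : w ∈ transversal hac w :=
  (mem_transversal_iff hac).mpr ⟨1, 1, by simp [scaleComponents, projection_add_projection_eq_self]⟩

theorem projection_mem_transversal (w : V) : a.projection c hac w ∈ transversal hac w :=
  subset_span (Set.mem_insert _ _)

theorem projection_symm_mem_transversal (w : V) : c.projection a hac.symm w ∈ transversal hac w :=
  subset_span (Set.mem_insert_of_mem _ rfl)

theorem exists_eq_transversal {b m : Submodule K V} (hab : a ⊓ b = ⊥) (hbc : b ⊓ c = ⊥)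
    (hm : finrank K m = 2) (hma : m ⊓ a ≠ ⊥) (hmb : m ⊓ b ≠ ⊥) (hmc : m ⊓ c ≠ ⊥) :
    ∃ w ∈ b, w ≠ 0 ∧ m = transversal hac w := by
  obtain ⟨u, ⟨hum, hua⟩, hu⟩ := exists_mem_ne_zero_of_ne_bot hma
  obtain ⟨w, ⟨hwm, hwb⟩, hw⟩ := exists_mem_ne_zero_of_ne_bot hmb
  obtain ⟨z, ⟨hzm, hzc⟩, hz⟩ := exists_mem_ne_zero_of_ne_bot hmc
  obtain ⟨s, t, rfl⟩ := mem_span_pair.mp <| eq_span_pair_of_finrank_eq_two hm hum hzm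
    (linearIndependent_pair_of_inf_eq_bot hac.inf_eq_bot hua hzc hu hz) ▸ hwm
  refine ⟨_, hwb, hw, eq_span_pair_of_finrank_eq_two hm ?_ ?_ ?_⟩
  · simpa [projection_apply_of_mem_left hac hua, projection_apply_of_mem_right hac hzc]
      using m.smul_mem s hum
  · simpa [projection_apply_of_mem_left hac.symm hzc, projection_apply_of_mem_right hac.symm hua]
      using m.smul_mem t hzm
  · refine linearIndependent_pair_of_inf_eq_bot hac.inf_eq_bot (projection_apply_mem _ _)
      (projection_apply_mem _ _) ?_ ?_
    · exact (projection_apply_eq_zero_iff hac).not.mpr (notMem_of_inf_eq_bot hbc hwb hw)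
    · exact (projection_apply_eq_zero_iff hac.symm).not.mpr
        (notMem_of_inf_eq_bot (inf_comm a b ▸ hab) hwb hw)

theorem smul_scaleComponents_eq {u v : V}
    (hua : LinearIndependent K ![a.projection c hac u, a.projection c hac v])
    (huc : LinearIndependent K ![c.projection a hac.symm u, c.projection a hac.symm v])
    {α β α' β' α'' β'' l m x y : K}
    (h : scaleComponents hac α β (l • u + m • v) =
      x • scaleComponents hac α' β' u + y • scaleComponents hac α'' β'' v) :
    l • scaleComponents hac α β u = x • scaleComponents hac α' β' u ∧
      m • scaleComponents hac α β v = y • scaleComponents hac α'' β'' v := by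
  have ha := congrArg (a.projection c hac) h
  have hc := congrArg (c.projection a hac.symm) h
  simp only [map_add, map_smul, projection_scaleComponents, projection_symm_scaleComponents,
    smul_smul] at ha hc
  obtain ⟨hα₁, hα₂⟩ := hua.eq_of_pair ha
  obtain ⟨hβ₁, hβ₂⟩ := huc.eq_of_pair hc
  simp only [scaleComponents, LinearMap.add_apply, LinearMap.smul_apply, smul_add, smul_smul]
  rw [hα₁, hα₂, hβ₁, hβ₂]
  exact ⟨rfl, rfl⟩

theorem exists_map_scaleComponents_le {b d : Submodule K V} (hab : a ⊓ b = ⊥) (hbc : b ⊓ c = ⊥)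
    (hb : finrank K b = 2) {w₁ w₂ w₃ : V} (hw₁b : w₁ ∈ b) (hw₂b : w₂ ∈ b) (hw₃b : w₃ ∈ b)
    (hw₁ : w₁ ≠ 0) (hw₂ : w₂ ≠ 0) (hw₃ : w₃ ≠ 0)
    (h₁₂ : transversal hac w₁ ⊓ transversal hac w₂ = ⊥)
    (h₁₃ : transversal hac w₁ ⊓ transversal hac w₃ = ⊥)
    (h₂₃ : transversal hac w₂ ⊓ transversal hac w₃ = ⊥) (hd : finrank K d = 2)
    (hd₁ : d ⊓ transversal hac w₁ ≠ ⊥) (hd₂ : d ⊓ transversal hac w₂ ≠ ⊥)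
    (hd₃ : d ⊓ transversal hac w₃ ≠ ⊥) :
    ∃ α β : K, (α ≠ 0 ∨ β ≠ 0) ∧ b.map (scaleComponents hac α β) ≤ d := by
  obtain ⟨_, ⟨hp₁d, hp₁T⟩, hp₁⟩ := exists_mem_ne_zero_of_ne_bot hd₁
  obtain ⟨_, ⟨hp₂d, hp₂T⟩, hp₂⟩ := exists_mem_ne_zero_of_ne_bot hd₂
  obtain ⟨_, ⟨hp₃d, hp₃T⟩, hp₃⟩ := exists_mem_ne_zero_of_ne_bot hd₃
  obtain ⟨α₁, β₁, rfl⟩ := (mem_transversal_iff hac).mp hp₁T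
  obtain ⟨α₂, β₂, rfl⟩ := (mem_transversal_iff hac).mp hp₂T
  obtain ⟨α₃, β₃, rfl⟩ := (mem_transversal_iff hac).mp hp₃T
  have hb₁₂ := eq_span_pair_of_finrank_eq_two hb hw₁b hw₂b <| linearIndependent_pair_of_inf_eq_bot
    h₁₂ (self_mem_transversal hac w₁) (self_mem_transversal hac w₂) hw₁ hw₂
  obtain ⟨l₁, l₂, rfl⟩ := mem_span_pair.mp (hb₁₂ ▸ hw₃b)
  obtain ⟨x, y, hp₃d'⟩ := mem_span_pair.mp <| eq_span_pair_of_finrank_eq_two hd hp₁d hp₂d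
    (linearIndependent_pair_of_inf_eq_bot h₁₂ hp₁T hp₂T hp₁ hp₂) ▸ hp₃d
  have hl₁ : l₁ ≠ 0 := by
    rintro rfl
    exact notMem_of_inf_eq_bot h₂₃ (by simpa using smul_mem _ l₂ (self_mem_transversal hac w₂))
      hw₃ (self_mem_transversal hac _)
  have hl₂ : l₂ ≠ 0 := by
    rintro rfl
    exact notMem_of_inf_eq_bot h₁₃ (by simpa using smul_mem _ l₁ (self_mem_transversal hac w₁))
      hw₃ (self_mem_transversal hac _)
  have hπa : ∀ {w}, w ∈ b → w ≠ 0 → a.projection c hac w ≠ 0 := fun hwb hw =>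
    (projection_apply_eq_zero_iff hac).not.mpr (notMem_of_inf_eq_bot hbc hwb hw)
  have hπc : ∀ {w}, w ∈ b → w ≠ 0 → c.projection a hac.symm w ≠ 0 := fun hwb hw =>
    (projection_apply_eq_zero_iff hac.symm).not.mpr
      (notMem_of_inf_eq_bot (inf_comm a b ▸ hab) hwb hw)
  obtain ⟨h₁, h₂⟩ := smul_scaleComponents_eq hac
    (linearIndependent_pair_of_inf_eq_bot h₁₂ (projection_mem_transversal hac w₁)
      (projection_mem_transversal hac _) (hπa hw₁b hw₁) (hπa hw₂b hw₂))
    (linearIndependent_pair_of_inf_eq_bot h₁₂ (projection_symm_mem_transversal hac w₁)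
      (projection_symm_mem_transversal hac _) (hπc hw₁b hw₁) (hπc hw₂b hw₂))
    hp₃d'.symm
  refine ⟨α₃, β₃, ?_, ?_⟩
  · by_contra! h
    exact hp₃ (by simp [h.1, h.2, scaleComponents])
  · rw [hb₁₂, map_span, span_le, Set.image_pair, Set.insert_subset_iff, Set.singleton_subset_iff]
    exact ⟨(smul_mem_iff _ hl₁).mp (h₁ ▸ d.smul_mem x hp₁d),
      (smul_mem_iff _ hl₂).mp (h₂ ▸ d.smul_mem y hp₂d)⟩

end Regulus

theorem gallucciProperty_of_field (K : Type*) [Field K] : GallucciProperty K := by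
  intro a b c e f g h d ha hb hc he hf hg hh hd hab hac hbc hef heg hfg hea heb hec hfa hfb hfc
    hga hgb hgc hha hhb hhc hde hdf hdg
  have hcompl : IsCompl a c :=
    (isCompl_iff_disjoint a c (by simp [ha, hc])).mpr (disjoint_iff.mpr hac)
  obtain ⟨w₁, hw₁b, hw₁, rfl⟩ := exists_eq_transversal hcompl hab hbc he hea heb hec
  obtain ⟨w₂, hw₂b, hw₂, rfl⟩ := exists_eq_transversal hcompl hab hbc hf hfa hfb hfc
  obtain ⟨w₃, hw₃b, hw₃, rfl⟩ := exists_eq_transversal hcompl hab hbc hg hga hgb hgc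
  obtain ⟨w₀, hw₀b, hw₀, rfl⟩ := exists_eq_transversal hcompl hab hbc hh hha hhb hhc
  obtain ⟨α, β, hαβ, hbd⟩ := exists_map_scaleComponents_le hcompl hab hbc hb hw₁b hw₂b hw₃b
    hw₁ hw₂ hw₃ hef heg hfg hd hde hdf hdg
  refine (Submodule.ne_bot_iff _).mpr ⟨scaleComponents hcompl α β w₀,
    ⟨(mem_transversal_iff hcompl).mpr ⟨α, β, rfl⟩, hbd (mem_map_of_mem hw₀b)⟩, ?_⟩
  exact scaleComponents_ne_zero hcompl (notMem_of_inf_eq_bot (inf_comm a b ▸ hab) hw₀b hw₀)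
    (notMem_of_inf_eq_bot hbc hw₀b hw₀) hαβ

/-- Pappus implies Gallucci in `ℙ³(K)` over a division ring `K`. -/
theorem pappus_implies_gallucci (K : Type*) [DivisionRing K]
    (hpappus : PappusProperty K) : GallucciProperty K :=
  letI : Field K := { ‹DivisionRing K› with mul_comm := mul_comm_of_pappusProperty hpappus }
  gallucciProperty_of_field K
end
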